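/- Let n ∈ ℕ, N = 2^n, and let G be the n-fold Kronecker power over 𝔽₂ of the kernel [[1,0],[1,1]]. For every T ⊆ {0,…,N−1} and every set Q ⊆ {0,…,n−1} of bit positions, let T' = {t ∈ T : for all q ∈ Q, the q-th binary digit of t is 0}. Then i₁(Σ_{t∈T} g_t) ≥ i₁(Σ_{t∈T'} g_t); that is, the Hamming weight of a sum of rows is bounded below by the Hamming weight of the sub-sum over those rows whose binary representations vanish on all positions of Q. -/

import Mathlib

open Finset

/-- The polar kernel `G₂ = [[1,0],[1,1]]` over `𝔽₂`. -/
def polarKernel : Matrix (Fin 2) (Fin 2) (ZMod 2) := !![1, 0; 1, 1]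

/-- The `n`-fold Kronecker power of the polar kernel, an `N × N` matrix over `𝔽₂`
with `N = 2 ^ n`, rows and columns indexed by `0, …, N-1`. -/
def polarG : (n : ℕ) → Matrix (Fin (2 ^ n)) (Fin (2 ^ n)) (ZMod 2)
  | 0 => 1
  | n + 1 =>
    Matrix.reindex (finCongr (by ring)) (finCongr (by ring))
      (Matrix.reindex finProdFinEquiv finProdFinEquiv
        (Matrix.kroneckerMap (· * ·) polarKernel (polarG n)))

/-- Row `g_t` of the polar matrix, as a vector in `𝔽₂^N`. -/
def row (n : ℕ) (t : Fin (2 ^ n)) : Fin (2 ^ n) → ZMod 2 := fun c => polarG n t c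

/-- Hamming weight `i₁(v)`: the number of nonzero coordinates of `v`. -/
def hammingWeight {N : ℕ} (v : Fin N → ZMod 2) : ℕ :=
  (Finset.univ.filter fun c => v c ≠ 0).card

/-- `popcount j`: the number of ones in the binary representation of `j`. -/
def popcount (j : ℕ) : ℕ := (Nat.bits j).count true

lemma or_eq_right_iff' {x y : ℕ} :
    x ||| y = y ↔ ∀ i, x.testBit i = true → y.testBit i = true := by
  constructor
  · intro h i hx
    have h2 := congrArg (Nat.testBit · i) h
    simp only [Nat.testBit_or, hx, Bool.true_or] at h2
    exact h2.symm
  · intro h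
    apply Nat.eq_of_testBit_eq
    intro i
    rw [Nat.testBit_or]
    cases hx : x.testBit i
    · simp
    · simp [h i hx]

lemma polarKernel_apply (a b : Fin 2) :
    polarKernel a b = if (b : ℕ) ||| (a : ℕ) = (a : ℕ) then 1 else 0 := by
  fin_cases a <;> fin_cases b <;> simp [polarKernel]

lemma split_bits (n c t : ℕ) :
    (c ||| t = t) ↔ ((c % 2^n ||| t % 2^n = t % 2^n) ∧ (c / 2^n ||| t / 2^n = t / 2^n)) := by
  rw [← Nat.shiftRight_eq_div_pow c n, ← Nat.shiftRight_eq_div_pow t n]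
  simp only [or_eq_right_iff', Nat.testBit_mod_two_pow, Nat.testBit_shiftRight,
    Bool.and_eq_true, decide_eq_true_eq]
  constructor
  · intro h
    exact ⟨fun i hi => ⟨hi.1, h i hi.2⟩, fun i hi => h (n + i) hi⟩
  · rintro ⟨h1, h2⟩ i hi
    rcases lt_or_ge i n with hlt | hge
    · exact (h1 i ⟨hlt, hi⟩).2
    · have := h2 (i - n) (by rwa [Nat.add_sub_cancel' hge])
      rwa [Nat.add_sub_cancel' hge] at this

lemma polarG_apply (n : ℕ) (t c : Fin (2 ^ n)) :
    polarG n t c = if (c : ℕ) ||| (t : ℕ) = (t : ℕ) then 1 else 0 := by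
  induction n with
  | zero =>
    have ht : t = c := by
      apply Fin.ext
      have h1 := t.isLt; have h2 := c.isLt
      simp only [pow_zero] at h1 h2
      omega
    subst ht
    simp [polarG, Matrix.one_apply]
  | succ n ih =>
    have hcast : 2 ^ (n + 1) = 2 * 2 ^ n := by ring
    have hstep : polarG (n + 1) t c =
        polarKernel (Fin.divNat (Fin.cast hcast t)) (Fin.divNat (Fin.cast hcast c)) *
          polarG n (Fin.modNat (Fin.cast hcast t)) (Fin.modNat (Fin.cast hcast c)) := rfl
    rw [hstep, polarKernel_apply, ih]
    simp only [Fin.coe_divNat, Fin.coe_modNat, Fin.coe_cast]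
    by_cases h1 : ((c : ℕ) % 2^n ||| (t : ℕ) % 2^n = (t : ℕ) % 2^n) <;>
      by_cases h2 : ((c : ℕ) / 2^n ||| (t : ℕ) / 2^n = (t : ℕ) / 2^n) <;>
      simp [h1, h2, split_bits n (c : ℕ) (t : ℕ)]

lemma flip_iff {c t q : ℕ} (hc : c.testBit q = false) (ht : t.testBit q = true) :
    (c ||| t = t) ↔ ((c ^^^ 2 ^ q) ||| t = t) := by
  simp only [or_eq_right_iff']
  constructor
  · intro h i hi
    rcases eq_or_ne i q with rfl | hne
    · exact ht
    · rw [Nat.testBit_xor, Nat.testBit_two_pow_of_ne (Ne.symm hne), Bool.xor_false] at hi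
      exact h i hi
  · intro h i hi
    have hne : i ≠ q := fun e => by rw [e, hc] at hi; exact Bool.false_ne_true hi
    exact h i (by
      rw [Nat.testBit_xor, Nat.testBit_two_pow_of_ne (Ne.symm hne), Bool.xor_false]
      exact hi)

lemma single_bit (n q : ℕ) (hq : q < n) (T : Finset (Fin (2 ^ n))) :
    hammingWeight (∑ t ∈ T.filter (fun t : Fin (2 ^ n) => (t : ℕ).testBit q = false), row n t) ≤
      hammingWeight (∑ t ∈ T, row n t) := by
  classical
  set S : Fin (2 ^ n) → ZMod 2 := ∑ t ∈ T, row n t with hS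
  set S0 : Fin (2 ^ n) → ZMod 2 :=
    ∑ t ∈ T.filter (fun t : Fin (2 ^ n) => (t : ℕ).testBit q = false), row n t with hS0
  set S1 : Fin (2 ^ n) → ZMod 2 :=
    ∑ t ∈ T.filter (fun t : Fin (2 ^ n) => ¬ ((t : ℕ).testBit q = false)), row n t with hS1
  have hsplit : ∀ c, S c = S0 c + S1 c := by
    intro c
    rw [hS, hS0, hS1]
    simp only [Finset.sum_apply]
    exact (Finset.sum_filter_add_sum_filter_not T _ _).symm
  have hflip : ∀ c : Fin (2 ^ n), (c : ℕ) ^^^ 2 ^ q < 2 ^ n :=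
    fun c => Nat.xor_lt_two_pow c.isLt (Nat.pow_lt_pow_right (by norm_num) hq)
  have ha : ∀ c : Fin (2 ^ n), (c : ℕ).testBit q = true → S0 c = 0 := by
    intro c hc
    rw [hS0, Finset.sum_apply]
    apply Finset.sum_eq_zero
    intro t ht
    rw [Finset.mem_filter] at ht
    rw [row, polarG_apply, if_neg]
    intro hor
    have := or_eq_right_iff'.1 hor q hc
    rw [ht.2] at this
    exact Bool.false_ne_true this
  have hb : ∀ c : Fin (2 ^ n), (c : ℕ).testBit q = false →
      S1 c = S1 ⟨(c : ℕ) ^^^ 2 ^ q, hflip c⟩ := by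
    intro c hc
    rw [hS1, Finset.sum_apply, Finset.sum_apply]
    apply Finset.sum_congr rfl
    intro t ht
    rw [Finset.mem_filter] at ht
    have htq : (t : ℕ).testBit q = true := by
      cases h : (t : ℕ).testBit q
      · exact absurd h ht.2
      · rfl
    rw [row, row, polarG_apply, polarG_apply]
    exact if_congr (flip_iff hc htq) rfl rfl
  have hflipbit : ∀ c : Fin (2 ^ n), (c : ℕ).testBit q = false →
      ((c : ℕ) ^^^ 2 ^ q).testBit q = true := by
    intro c hc
    rw [Nat.testBit_xor, hc, Nat.testBit_two_pow_self]
    rfl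
  have hdom : ∀ c : Fin (2 ^ n), S0 c ≠ 0 → (c : ℕ).testBit q = false := by
    intro c hc
    cases h : (c : ℕ).testBit q
    · rfl
    · exact absurd (ha c h) hc
  rw [hammingWeight, hammingWeight]
  apply Finset.card_le_card_of_injOn
    (fun c => if S c ≠ 0 then c else ⟨(c : ℕ) ^^^ 2 ^ q, hflip c⟩)
  · intro c hc
    rw [Finset.mem_coe, Finset.mem_filter] at hc
    have hc0 := hc.2
    have hbit := hdom c hc0
    dsimp only
    by_cases hSc : S c ≠ 0
    · rw [if_pos hSc]
      exact Finset.mem_filter.2 ⟨Finset.mem_univ _, hSc⟩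
    · rw [if_neg hSc]
      push_neg at hSc
      refine Finset.mem_filter.2 ⟨Finset.mem_univ _, ?_⟩
      have hS1c : S1 c ≠ 0 := by
        intro h
        apply hc0
        have h2 := hsplit c
        rw [hSc, h, add_zero] at h2
        exact h2.symm
      have h3 : S ⟨(c : ℕ) ^^^ 2 ^ q, hflip c⟩ =
          S0 ⟨(c : ℕ) ^^^ 2 ^ q, hflip c⟩ + S1 ⟨(c : ℕ) ^^^ 2 ^ q, hflip c⟩ := hsplit _
      rw [ha ⟨(c : ℕ) ^^^ 2 ^ q, hflip c⟩ (hflipbit c hbit), zero_add, ← hb c hbit] at h3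
      rw [h3]
      exact hS1c
  · intro c1 hc1 c2 hc2 heq
    rw [Finset.coe_filter] at hc1 hc2
    simp only [Set.mem_setOf_eq] at hc1 hc2
    have hb1 := hdom c1 hc1.2
    have hb2 := hdom c2 hc2.2
    dsimp only at heq
    by_cases h1 : S c1 ≠ 0 <;> by_cases h2 : S c2 ≠ 0
    · rwa [if_pos h1, if_pos h2] at heq
    · rw [if_pos h1, if_neg h2] at heq
      exfalso
      have h3 := congrArg (fun x : Fin (2 ^ n) => ((x : ℕ)).testBit q) heq
      simp only at h3
      rw [hb1, hflipbit c2 hb2] at h3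
      exact Bool.false_ne_true h3
    · rw [if_neg h1, if_pos h2] at heq
      exfalso
      have h3 := congrArg (fun x : Fin (2 ^ n) => ((x : ℕ)).testBit q) heq
      simp only at h3
      rw [hb2, hflipbit c1 hb1] at h3
      exact Bool.false_ne_true h3.symm
    · rw [if_neg h1, if_neg h2] at heq
      have hv : (c1 : ℕ) ^^^ 2 ^ q = (c2 : ℕ) ^^^ 2 ^ q := congrArg Fin.val heq
      have h4 : (c1 : ℕ) = (c2 : ℕ) := by
        have h5 := congrArg (· ^^^ 2 ^ q) hv
        simpa [Nat.xor_assoc] using h5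
      exact Fin.ext h4

/-- the Hamming weight of a sum of rows is bounded below by the weight of the
sub-sum over the rows whose binary representations vanish on all positions of `Q`. -/
theorem hamming_weight_lower_bound_zero_bits (n : ℕ) (T : Finset (Fin (2 ^ n)))
    (Q : Finset ℕ) (hQ : ∀ q ∈ Q, q < n) :
    hammingWeight
        (∑ t ∈ T.filter (fun t : Fin (2 ^ n) => ∀ q ∈ Q, (t : ℕ).testBit q = false), row n t) ≤
      hammingWeight (∑ t ∈ T, row n t) := by
  classical
  induction Q using Finset.induction_on with
  | empty => simp
  | @insert q Q hqQ ih =>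
    have hqn : q < n := hQ q (Finset.mem_insert_self q Q)
    have hfil : T.filter (fun t : Fin (2 ^ n) => ∀ q' ∈ insert q Q, (t : ℕ).testBit q' = false)
        = (T.filter (fun t : Fin (2 ^ n) => ∀ q' ∈ Q, (t : ℕ).testBit q' = false)).filter
            (fun t : Fin (2 ^ n) => (t : ℕ).testBit q = false) := by
      rw [Finset.filter_filter]
      apply Finset.filter_congr
      intro t _
      simp only [Finset.forall_mem_insert]
      tauto
    rw [hfil]
    exact le_trans
      (single_bit n q hqn (T.filter (fun t : Fin (2 ^ n) => ∀ q' ∈ Q, (t : ℕ).testBit q' = false)))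
      (ih (fun q' hq' => hQ q' (Finset.mem_insert_of_mem hq')))
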